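/- arXiv:2510.14878 — 3 statements merged into one kernel-verified Lean document; each statement's English description precedes it below -/
import Mathlib

section
/- For every τ ∈ ℝ, the squeezing operator T_τ is a unitary operator on L²(γ); moreover T_0 = Id, T_{τ₁} ∘ T_{τ₂} = T_{τ₁+τ₂} for all τ₁, τ₂ ∈ ℝ, and the adjoint satisfies T_τ* = T_{−τ} (equivalently T_τ^{−1} = T_{−τ}). -/
/-!
Write `T_τ f = a_τ · (f ∘ (e^τ ·))`, with `a_τ = squeezeFactor τ`. The weighted measure
`a_τ(x)² γ(dx)` is the Gaussian `N(0, e^{-2τ})`, which the dilation `x ↦ e^τ x` pushes forward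
to `γ`; so `∫ T_τ f · T_τ g dγ = ∫ f g dγ` for all `f, g`, and `T_τ` is an isometry of `L²(γ)`.
The cocycle identity `a_{τ₁+τ₂}(x) = a_{τ₁}(x) a_{τ₂}(e^{τ₁} x)` gives the group law, and the
adjoint formula is the isometry applied to `f` and `T_{-τ} g`.
-/

open MeasureTheory

/-- The standard Gaussian measure `N(0,1)` on `ℝ`. -/
noncomputable def stdGaussian : Measure ℝ := ProbabilityTheory.gaussianReal 0 1

/-- The squeezing operator `(T_τ f)(x) = e^{τ/2} e^{−((e^{2τ}−1)/4)x²} f(e^τ x)`. -/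
noncomputable def squeeze (τ : ℝ) (f : ℝ → ℝ) : ℝ → ℝ :=
  fun x => Real.exp (τ / 2) * Real.exp (-((Real.exp (2 * τ) - 1) / 4) * x ^ 2) *
    f (Real.exp τ * x)

open ProbabilityTheory (gaussianReal gaussianPDF gaussianPDFReal gaussianReal_of_var_ne_zero
  gaussianReal_map_const_mul gaussianReal_absolutelyContinuous gaussianReal_absolutelyContinuous'
  gaussianPDFReal_nonneg measurable_gaussianPDF)
open Real
open scoped ENNReal

noncomputable def squeezeFactor (τ x : ℝ) : ℝ :=
  exp (τ / 2) * exp (-((exp (2 * τ) - 1) / 4) * x ^ 2)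

@[fun_prop]
lemma measurable_squeezeFactor (τ : ℝ) : Measurable (squeezeFactor τ) := by
  unfold squeezeFactor; fun_prop

lemma squeeze_apply (τ : ℝ) (f : ℝ → ℝ) (x : ℝ) :
    squeeze τ f x = squeezeFactor τ x * f (exp τ * x) := rfl

lemma squeezeFactor_zero (x : ℝ) : squeezeFactor 0 x = 1 := by
  simp [squeezeFactor]

lemma squeezeFactor_add (τ₁ τ₂ x : ℝ) :
    squeezeFactor (τ₁ + τ₂) x = squeezeFactor τ₁ x * squeezeFactor τ₂ (exp τ₁ * x) := by
  simp only [squeezeFactor, ← exp_add, exp_eq_exp, mul_pow, ← exp_nat_mul]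
  simp only [mul_add, exp_add, Nat.cast_ofNat]
  ring

lemma squeezeFactor_sq (τ x : ℝ) :
    squeezeFactor τ x ^ 2 = exp τ * exp (-((exp (2 * τ) - 1) / 2) * x ^ 2) := by
  simp only [squeezeFactor, mul_pow, ← exp_nat_mul]
  ring_nf

lemma gaussianPDFReal_mul_squeezeFactor_sq (τ x : ℝ) :
    gaussianPDFReal 0 1 x * squeezeFactor τ x ^ 2 =
      gaussianPDFReal 0 (exp (-(2 * τ))).toNNReal x := by
  have hv : exp (-(2 * τ)) = (exp τ)⁻¹ ^ 2 := by rw [← exp_neg, ← exp_nat_mul]; ring_nf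
  have h2 : exp (2 * τ) = exp τ ^ 2 := by rw [← exp_nat_mul]; ring_nf
  rw [gaussianPDFReal, gaussianPDFReal, squeezeFactor_sq, Real.coe_toNNReal _ (exp_pos _).le,
    NNReal.coe_one, hv, h2, mul_one, sqrt_mul (by positivity) ((exp τ)⁻¹ ^ 2),
    sqrt_sq (by positivity)]
  field_simp
  rw [← exp_add]
  ring_nf

theorem squeeze_zero_left (f : ℝ → ℝ) : squeeze 0 f = f := by
  funext x; simp [squeeze_apply, squeezeFactor_zero]

theorem squeeze_squeeze (τ₁ τ₂ : ℝ) (f : ℝ → ℝ) :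
    squeeze τ₁ (squeeze τ₂ f) = squeeze (τ₁ + τ₂) f := by
  funext x
  rw [squeeze_apply, squeeze_apply, squeeze_apply, squeezeFactor_add, ← mul_assoc, ← mul_assoc,
    ← exp_add, add_comm τ₂]

theorem squeeze_squeeze_neg (τ : ℝ) (f : ℝ → ℝ) : squeeze τ (squeeze (-τ) f) = f := by
  rw [squeeze_squeeze, add_neg_cancel, squeeze_zero_left]

theorem squeeze_neg_squeeze (τ : ℝ) (f : ℝ → ℝ) : squeeze (-τ) (squeeze τ f) = f := by
  simpa using squeeze_squeeze_neg (-τ) f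

lemma withDensity_squeezeFactor_sq (τ : ℝ) :
    stdGaussian.withDensity (fun x => ENNReal.ofReal (squeezeFactor τ x ^ 2)) =
      gaussianReal 0 (exp (-(2 * τ))).toNNReal := by
  have hv : (exp (-(2 * τ))).toNNReal ≠ 0 := by simp [exp_pos]
  rw [stdGaussian, gaussianReal_of_var_ne_zero _ one_ne_zero, gaussianReal_of_var_ne_zero _ hv,
    ← withDensity_mul _ (measurable_gaussianPDF 0 1) (by fun_prop)]
  congr 1
  funext x
  rw [Pi.mul_apply, gaussianPDF, gaussianPDF, ← ENNReal.ofReal_mul (gaussianPDFReal_nonneg 0 1 x),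
    gaussianPDFReal_mul_squeezeFactor_sq]

lemma map_const_mul_withDensity_squeezeFactor_sq (τ : ℝ) :
    (stdGaussian.withDensity fun x => ENNReal.ofReal (squeezeFactor τ x ^ 2)).map (exp τ * ·) =
      stdGaussian := by
  rw [withDensity_squeezeFactor_sq, gaussianReal_map_const_mul, mul_zero, stdGaussian]
  congr 1
  ext
  simp [Real.coe_toNNReal _ (exp_pos _).le, ← exp_nat_mul, ← exp_add]

lemma lintegral_squeezeFactor_sq_mul_comp (τ : ℝ) (F : ℝ → ℝ≥0∞) :
    ∫⁻ x, ENNReal.ofReal (squeezeFactor τ x ^ 2) * F (exp τ * x) ∂stdGaussian =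
      ∫⁻ y, F y ∂stdGaussian := by
  conv_rhs => rw [← map_const_mul_withDensity_squeezeFactor_sq τ]
  rw [(measurableEmbedding_mulLeft₀ (exp_ne_zero τ)).lintegral_map,
    lintegral_withDensity_eq_lintegral_mul_non_measurable _ (by fun_prop)
      (ae_of_all _ fun _ => ENNReal.ofReal_lt_top)]
  rfl

lemma integral_squeezeFactor_sq_mul_comp (τ : ℝ) (F : ℝ → ℝ) :
    ∫ x, squeezeFactor τ x ^ 2 * F (exp τ * x) ∂stdGaussian = ∫ y, F y ∂stdGaussian := by
  conv_rhs => rw [← map_const_mul_withDensity_squeezeFactor_sq τ]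
  rw [(measurableEmbedding_mulLeft₀ (exp_ne_zero τ)).integral_map,
    integral_withDensity_eq_integral_toReal_smul (by fun_prop)
      (ae_of_all _ fun _ => ENNReal.ofReal_lt_top)]
  simp [ENNReal.toReal_ofReal (sq_nonneg _)]

lemma squeeze_mul_squeeze (τ : ℝ) (f g : ℝ → ℝ) (x : ℝ) :
    squeeze τ f x * squeeze τ g x = squeezeFactor τ x ^ 2 * (f (exp τ * x) * g (exp τ * x)) := by
  rw [squeeze_apply, squeeze_apply]; ring

theorem integral_squeeze_mul_squeeze (τ : ℝ) (f g : ℝ → ℝ) :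
    ∫ x, squeeze τ f x * squeeze τ g x ∂stdGaussian = ∫ x, f x * g x ∂stdGaussian := by
  simp_rw [squeeze_mul_squeeze]
  exact integral_squeezeFactor_sq_mul_comp τ fun y => f y * g y

theorem integral_squeeze_mul (τ : ℝ) (f g : ℝ → ℝ) :
    ∫ x, squeeze τ f x * g x ∂stdGaussian = ∫ x, f x * squeeze (-τ) g x ∂stdGaussian := by
  conv_lhs => rw [← squeeze_squeeze_neg τ g]
  exact integral_squeeze_mul_squeeze τ f (squeeze (-τ) g)

lemma enorm_squeeze_rpow_two (τ : ℝ) (f : ℝ → ℝ) (x : ℝ) :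
    ‖squeeze τ f x‖ₑ ^ (2 : ℝ) =
      ENNReal.ofReal (squeezeFactor τ x ^ 2) * ‖f (exp τ * x)‖ₑ ^ (2 : ℝ) := by
  rw [squeeze_apply, enorm_mul, ENNReal.mul_rpow_of_nonneg _ _ zero_le_two, ENNReal.rpow_two,
    Real.enorm_eq_ofReal_abs, ← ENNReal.ofReal_pow (abs_nonneg _), sq_abs]

theorem eLpNorm_squeeze (τ : ℝ) (f : ℝ → ℝ) :
    eLpNorm (squeeze τ f) 2 stdGaussian = eLpNorm f 2 stdGaussian := by
  simp only [eLpNorm_eq_lintegral_rpow_enorm_toReal two_ne_zero ENNReal.ofNat_ne_top,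
    ENNReal.toReal_ofNat, enorm_squeeze_rpow_two,
    lintegral_squeezeFactor_sq_mul_comp τ fun y => ‖f y‖ₑ ^ (2 : ℝ)]

lemma quasiMeasurePreserving_const_mul_stdGaussian {c : ℝ} (hc : c ≠ 0) :
    Measure.QuasiMeasurePreserving (c * ·) stdGaussian stdGaussian := by
  refine ⟨measurable_const_mul c, ?_⟩
  rw [stdGaussian, gaussianReal_map_const_mul]
  have hv : NNReal.mk (c ^ 2) (sq_nonneg c) * 1 ≠ 0 := by
    rw [Ne, ← NNReal.coe_eq_zero]; simpa using hc
  exact (gaussianReal_absolutelyContinuous _ hv).trans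
    (gaussianReal_absolutelyContinuous' 0 one_ne_zero)

theorem MeasureTheory.AEStronglyMeasurable.squeeze (τ : ℝ) {f : ℝ → ℝ}
    (hf : AEStronglyMeasurable f stdGaussian) :
    AEStronglyMeasurable (squeeze τ f) stdGaussian :=
  (measurable_squeezeFactor τ).aestronglyMeasurable.mul
    (hf.comp_quasiMeasurePreserving (quasiMeasurePreserving_const_mul_stdGaussian (exp_ne_zero τ)))

theorem MeasureTheory.MemLp.squeeze (τ : ℝ) {f : ℝ → ℝ} (hf : MemLp f 2 stdGaussian) :
    MemLp (squeeze τ f) 2 stdGaussian :=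
  ⟨hf.1.squeeze τ, by rw [eLpNorm_squeeze]; exact hf.2⟩

/-- For every `τ ∈ ℝ`, the squeezing operator `T_τ` is a unitary operator on `L²(γ)`
(it maps `L²(γ)` into itself, preserves inner products, and is invertible with
inverse `T_{−τ}`); moreover `T_0 = Id`, `T_{τ₁} ∘ T_{τ₂} = T_{τ₁+τ₂}`, and the adjoint
satisfies `T_τ* = T_{−τ}`. -/
theorem squeeze_unitary (τ : ℝ) :
    (∀ f : ℝ → ℝ, MemLp f 2 stdGaussian → MemLp (squeeze τ f) 2 stdGaussian) ∧
    (∀ f g : ℝ → ℝ, MemLp f 2 stdGaussian → MemLp g 2 stdGaussian →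
      ∫ x, squeeze τ f x * squeeze τ g x ∂stdGaussian = ∫ x, f x * g x ∂stdGaussian) ∧
    (∀ f : ℝ → ℝ, squeeze 0 f = f) ∧
    (∀ τ₁ τ₂ : ℝ, ∀ f : ℝ → ℝ, squeeze τ₁ (squeeze τ₂ f) = squeeze (τ₁ + τ₂) f) ∧
    (∀ f : ℝ → ℝ, squeeze (-τ) (squeeze τ f) = f ∧ squeeze τ (squeeze (-τ) f) = f) ∧
    (∀ f g : ℝ → ℝ, MemLp f 2 stdGaussian → MemLp g 2 stdGaussian →
      ∫ x, squeeze τ f x * g x ∂stdGaussian = ∫ x, f x * squeeze (-τ) g x ∂stdGaussian) :=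
  ⟨fun _ hf => hf.squeeze τ, fun f g _ _ => integral_squeeze_mul_squeeze τ f g,
    squeeze_zero_left, squeeze_squeeze,
    fun f => ⟨squeeze_neg_squeeze τ f, squeeze_squeeze_neg τ f⟩,
    fun f g _ _ => integral_squeeze_mul τ f g⟩
end

section
/- Let H, (v_n), (v̂_n) be as in the context and let (a_k) be any nonnegative summable sequence. Then for every n ∈ ℕ, the operator K = Σ_k a_k⟨v_k,·⟩v_k satisfies λ_n(K) ≤ a_n·|⟨v̂_n, v_n⟩|² + Σ_{k=n+1}^∞ a_k. -/
open scoped InnerProductSpace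

/-- The `(n+1)`-th largest eigenvalue of a (positive compact self-adjoint) operator,
defined via the Courant–Fischer min-max principle. -/
noncomputable def nthEig {H : Type*} [NormedAddCommGroup H] [InnerProductSpace ℝ H]
    (K : H → H) (n : ℕ) : ℝ :=
  ⨆ V : {V : Submodule ℝ H // Module.finrank ℝ V = n + 1},
    ⨅ x : {x : H // x ∈ V.1 ∧ ‖x‖ = 1}, ⟪x.1, K x.1⟫_ℝ

/-! By the min-max principle it suffices to find, in every `(n+1)`-dimensional subspace
`V`, a unit vector `x` with
`⟪x, K x⟫ = ∑ a_k ⟪v_k, x⟫² ≤ a_n ⟪v̂_n, v_n⟫² + ∑_{k>n} a_k`.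
A dimension count gives a unit `x ∈ V` orthogonal to `v̂_0, …, v̂_{n-1}`. As
`v_k ∈ span {v̂_0, …, v̂_k}`, such an `x` is orthogonal to `v_0, …, v_{n-1}`, and
`⟪v_n, x⟫ = ⟪v̂_n, x⟫ ⟪v_n, v̂_n⟫` has modulus at most `|⟪v̂_n, v_n⟫|`; the terms with
`k > n` are bounded by `a_k` since `|⟪v_k, x⟫| ≤ 1`. -/

section GramSchmidt

open InnerProductSpace Submodule

variable {𝕜 E ι : Type*} [RCLike 𝕜] [NormedAddCommGroup E] [InnerProductSpace 𝕜 E]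
  [LinearOrder ι] [LocallyFiniteOrderBot ι] [WellFoundedLT ι]

theorem inner_eq_zero_of_forall_inner_gramSchmidtNormed_eq_zero (f : ι → E) {x : E} {k : ι}
    (h : ∀ j ≤ k, ⟪gramSchmidtNormed 𝕜 f j, x⟫_𝕜 = 0) : ⟪f k, x⟫_𝕜 = 0 := by
  have hspan : span 𝕜 (gramSchmidtNormed 𝕜 f '' Set.Iic k) ≤ (𝕜 ∙ x)ᗮ := by
    rw [span_le]
    rintro _ ⟨j, hj, rfl⟩
    exact mem_orthogonal_singleton_iff_inner_left.2 (h j hj)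
  have hf : f k ∈ span 𝕜 (gramSchmidtNormed 𝕜 f '' Set.Iic k) := by
    rw [span_gramSchmidtNormed, span_gramSchmidt_Iic]
    exact subset_span ⟨k, Set.mem_Iic.2 le_rfl, rfl⟩
  exact mem_orthogonal_singleton_iff_inner_left.1 (hspan hf)

theorem inner_gramSchmidtNormed_eq_zero (f : ι → E) {i j : ι} (hij : i ≠ j) :
    ⟪gramSchmidtNormed 𝕜 f i, gramSchmidtNormed 𝕜 f j⟫_𝕜 = 0 := by
  simp [gramSchmidtNormed, inner_smul_left, inner_smul_right, gramSchmidt_orthogonal 𝕜 f hij]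

theorem norm_inner_le_norm_inner_gramSchmidtNormed (f : ι → E) {x : E} (hx : ‖x‖ ≤ 1) {n : ι}
    (h : ∀ j < n, ⟪gramSchmidtNormed 𝕜 f j, x⟫_𝕜 = 0) :
    ‖⟪f n, x⟫_𝕜‖ ≤ ‖⟪gramSchmidtNormed 𝕜 f n, f n⟫_𝕜‖ := by
  set e := gramSchmidtNormed 𝕜 f
  -- `e n = 0` when `f n` depends linearly on its predecessors.
  have he : ‖e n‖ ≤ 1 := by
    rcases eq_or_ne (e n) 0 with h0 | h0
    · simp [h0]
    · exact (gramSchmidtNormed_unit_length' h0).le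
  have hperp : ∀ j ≤ n, ⟪e j, x - ⟪e n, x⟫_𝕜 • e n⟫_𝕜 = 0 := by
    intro j hj
    rw [inner_sub_right, inner_smul_right]
    rcases hj.lt_or_eq with hj | rfl
    · simp [h j hj, inner_gramSchmidtNormed_eq_zero f hj.ne, e]
    · rcases eq_or_ne (e j) 0 with h0 | h0
      · simp [h0]
      · rw [inner_self_eq_norm_sq_to_K, gramSchmidtNormed_unit_length' h0]
        simp
  have hfn : ⟪f n, x⟫_𝕜 = ⟪e n, x⟫_𝕜 * ⟪f n, e n⟫_𝕜 := by
    have := inner_eq_zero_of_forall_inner_gramSchmidtNormed_eq_zero f hperp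
    rwa [inner_sub_right, inner_smul_right, sub_eq_zero] at this
  calc ‖⟪f n, x⟫_𝕜‖ = ‖⟪e n, x⟫_𝕜‖ * ‖⟪e n, f n⟫_𝕜‖ := by
        rw [hfn, norm_mul, norm_inner_symm (f n)]
    _ ≤ 1 * ‖⟪e n, f n⟫_𝕜‖ := by
        gcongr
        exact (norm_inner_le_norm _ _).trans (mul_le_one₀ he (norm_nonneg _) hx)
    _ = ‖⟪e n, f n⟫_𝕜‖ := one_mul _

end GramSchmidt

theorem Submodule.exists_norm_eq_one_forall_inner_eq_zero {𝕜 E : Type*} [RCLike 𝕜]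
    [NormedAddCommGroup E] [InnerProductSpace 𝕜 E] (V : Submodule 𝕜 E) (e : ℕ → E) {n : ℕ}
    (hV : n < Module.finrank 𝕜 V) : ∃ x ∈ V, ‖x‖ = 1 ∧ ∀ j < n, ⟪e j, x⟫_𝕜 = 0 := by
  have : FiniteDimensional 𝕜 V := Module.finite_of_finrank_pos (n.zero_le.trans_lt hV)
  let T : V →ₗ[𝕜] (Fin n → 𝕜) := LinearMap.pi fun i => (innerₛₗ 𝕜 (e i)).comp V.subtype
  obtain ⟨y, hy, hy0⟩ := (Submodule.ne_bot_iff _).1 <|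
    LinearMap.ker_ne_bot_of_finrank_lt (f := T) (by rwa [Module.finrank_fin_fun])
  rw [LinearMap.mem_ker] at hy
  have hy0' : (y : E) ≠ 0 := by exact_mod_cast hy0
  refine ⟨(‖(y : E)‖⁻¹ : 𝕜) • (y : E), V.smul_mem _ y.2, norm_smul_inv_norm hy0', fun j hj => ?_⟩
  have := congrFun hy ⟨j, hj⟩
  simp only [T, LinearMap.pi_apply, LinearMap.comp_apply, innerₛₗ_apply_apply,
    Submodule.subtype_apply, Pi.zero_apply] at this
  rw [inner_smul_right, this, mul_zero]

theorem inner_tsum_inner_smul_eq_tsum_mul_sq {ι H : Type*} [NormedAddCommGroup H]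
    [InnerProductSpace ℝ H] [CompleteSpace H] {v : ι → H} (hv : ∀ k, ‖v k‖ ≤ 1) {a : ι → ℝ}
    (ha : Summable a) (x : H) :
    ⟪x, ∑' k, (a k * ⟪v k, x⟫_ℝ) • v k⟫_ℝ = ∑' k, a k * ⟪v k, x⟫_ℝ ^ 2 := by
  have hterm : Summable fun k => (a k * ⟪v k, x⟫_ℝ) • v k := by
    refine (ha.abs.mul_right ‖x‖).of_norm_bounded fun k => ?_
    rw [norm_smul, norm_mul, Real.norm_eq_abs, mul_assoc]
    gcongr
    calc ‖⟪v k, x⟫_ℝ‖ * ‖v k‖ ≤ ‖v k‖ * ‖x‖ * 1 := by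
          gcongr
          exacts [norm_inner_le_norm _ _, hv k]
      _ ≤ ‖x‖ := by rw [mul_one]; exact mul_le_of_le_one_left (norm_nonneg _) (hv k)
  rw [← innerSL_apply_apply ℝ, (innerSL ℝ x).map_tsum hterm]
  refine tsum_congr fun k => ?_
  rw [innerSL_apply_apply, real_inner_smul_right, real_inner_comm x]
  ring

theorem tsum_mul_le_mul_add_tsum_tail {a b : ℕ → ℝ} (ha : ∀ k, 0 ≤ a k) (hsum : Summable a)
    (hb0 : ∀ k, 0 ≤ b k) (hb1 : ∀ k, b k ≤ 1) {n : ℕ} (hb : ∀ k < n, b k = 0) :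
    ∑' k, a k * b k ≤ a n * b n + ∑' k, a (n + 1 + k) := by
  have hab : Summable fun k => a k * b k :=
    hsum.of_nonneg_of_le (fun k => mul_nonneg (ha k) (hb0 k))
      fun k => mul_le_of_le_one_right (ha k) (hb1 k)
  rw [← hab.sum_add_tsum_nat_add (n + 1), Finset.sum_range_succ,
    Finset.sum_eq_zero fun k hk => by rw [hb k (Finset.mem_range.1 hk), mul_zero], zero_add]
  gcongr with k
  · exact (summable_nat_add_iff (n + 1)).2 hab
  · exact hsum.comp_injective (add_right_injective (n + 1))
  · rw [add_comm k]
    exact mul_le_of_le_one_right (ha _) (hb1 _)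

theorem nthEig_le {H : Type*} [NormedAddCommGroup H] [InnerProductSpace ℝ H] {K : H → H}
    {n : ℕ} {C : ℝ} (hK : ∀ x, 0 ≤ ⟪x, K x⟫_ℝ) (hC : 0 ≤ C)
    (h : ∀ V : Submodule ℝ H, Module.finrank ℝ V = n + 1 → ∃ x ∈ V, ‖x‖ = 1 ∧ ⟪x, K x⟫_ℝ ≤ C) :
    nthEig K n ≤ C := by
  refine Real.iSup_le (fun V => ?_) hC
  obtain ⟨x, hxV, hx1, hxC⟩ := h V.1 V.2
  exact ciInf_le_of_le ⟨0, by rintro _ ⟨y, rfl⟩; exact hK y⟩ ⟨x, hxV, hx1⟩ hxC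

theorem nthEig_upper_bound_general
    {H : Type*} [NormedAddCommGroup H] [InnerProductSpace ℝ H] [CompleteSpace H]
    (v : ℕ → H) (hv1 : ∀ k, ‖v k‖ = 1)
    (a : ℕ → ℝ) (ha : ∀ k, 0 ≤ a k) (hsum : Summable a) (n : ℕ) :
    nthEig (fun x : H => ∑' k : ℕ, (a k * ⟪v k, x⟫_ℝ) • v k) n
      ≤ a n * ⟪InnerProductSpace.gramSchmidtNormed ℝ v n, v n⟫_ℝ ^ 2 + ∑' k : ℕ, a (n + 1 + k) := by
  set e := InnerProductSpace.gramSchmidtNormed ℝ v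
  have hv : ∀ k, ‖v k‖ ≤ 1 := fun k => (hv1 k).le
  have hK : ∀ x, ⟪x, ∑' k, (a k * ⟪v k, x⟫_ℝ) • v k⟫_ℝ = ∑' k, a k * ⟪v k, x⟫_ℝ ^ 2 :=
    inner_tsum_inner_smul_eq_tsum_mul_sq hv hsum
  refine nthEig_le (fun x => hK x ▸ tsum_nonneg fun k => mul_nonneg (ha k) (sq_nonneg _))
    (add_nonneg (mul_nonneg (ha n) (sq_nonneg _)) (tsum_nonneg fun k => ha _)) fun V hV => ?_
  obtain ⟨x, hxV, hx1, hxe⟩ := V.exists_norm_eq_one_forall_inner_eq_zero e (n := n) (by omega)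
  have hsq_le_one : ∀ k, ⟪v k, x⟫_ℝ ^ 2 ≤ 1 := fun k =>
    (sq_le_one_iff_abs_le_one _).2 <|
      (abs_real_inner_le_norm _ _).trans (by rw [hv1, hx1, one_mul])
  have hsq_eq_zero : ∀ k < n, ⟪v k, x⟫_ℝ ^ 2 = 0 := fun k hk => by
    rw [inner_eq_zero_of_forall_inner_gramSchmidtNormed_eq_zero v
      fun j hj => hxe j (hj.trans_lt hk), sq, mul_zero]
  have hsq_le : ⟪v n, x⟫_ℝ ^ 2 ≤ ⟪e n, v n⟫_ℝ ^ 2 :=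
    sq_le_sq.2 (norm_inner_le_norm_inner_gramSchmidtNormed v hx1.le hxe)
  refine ⟨x, hxV, hx1, ?_⟩
  calc ⟪x, ∑' k, (a k * ⟪v k, x⟫_ℝ) • v k⟫_ℝ
      ≤ a n * ⟪v n, x⟫_ℝ ^ 2 + ∑' k, a (n + 1 + k) :=
        hK x ▸ tsum_mul_le_mul_add_tsum_tail ha hsum (fun k => sq_nonneg _) hsq_le_one hsq_eq_zero
    _ ≤ a n * ⟪e n, v n⟫_ℝ ^ 2 + ∑' k, a (n + 1 + k) := by gcongr; exact ha n

/-- **Upper bound on the eigenvalues of kernels with nonnegative coefficients.** For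
any nonnegative summable sequence `(a_k)` and every `n`,
`λ_n(K) ≤ a_n|⟨v̂_n,v_n⟩|² + Σ_{k>n} a_k` for `K = Σ_k a_k⟨v_k,·⟩v_k`. -/
theorem nthEig_upper_bound
    {H : Type*} [NormedAddCommGroup H] [InnerProductSpace ℝ H] [CompleteSpace H]
    [TopologicalSpace.SeparableSpace H]
    (v : ℕ → H) (hv1 : ∀ k, ‖v k‖ = 1) (hli : LinearIndependent ℝ v)
    (hdense : (Submodule.span ℝ (Set.range v)).topologicalClosure = ⊤)
    (a : ℕ → ℝ) (ha : ∀ k, 0 ≤ a k) (hsum : Summable a) (n : ℕ) :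
    nthEig (fun x : H => ∑' k : ℕ, (a k * ⟪v k, x⟫_ℝ) • v k) n
      ≤ a n * ⟪InnerProductSpace.gramSchmidtNormed ℝ v n, v n⟫_ℝ ^ 2 + ∑' k : ℕ, a (n + 1 + k) :=
  nthEig_upper_bound_general v hv1 a ha hsum n
end

section
/- Let v₀,…,v_n be linearly independent unit vectors in a real Hilbert space H with Gram matrix G = (⟨v_i, v_j⟩)_{i,j=0}^n, let a₀,…,a_n ≥ 0 and A = diag(a₀,…,a_n). Then: (i) the minimum of Σ_{k=0}^n a_k·⟨x, v_k⟩² over unit vectors x ∈ span(v₀,…,v_n) equals λ_min(G^{1/2} A G^{1/2}); (ii) the (n,n) diagonal entry of G^{−1} equals 1/|⟨v̂_n, v_n⟩|², where v̂_n is the n-th Gram–Schmidt vector of (v_k); (iii) consequently, for any nonnegative summable extension a_{n+1}, a_{n+2},…, the operator K = Σ_{k=0}^∞ a_k⟨v_k,·⟩v_k satisfies λ_n(K) ≥ λ_min(G^{1/2} A G^{1/2}). -/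
/-!
Write `x = ∑ₖ tₖ vₖ` for `x` in the span and let `S = G^{1/2}`. The coordinates `⟪vₖ, x⟫` form the
vector `G t = S (S t)` and `‖x‖² = t ⬝ G t = |S t|²`, so as `x` runs over the unit sphere of the
span, `c = S t` runs over the unit sphere of `ℝⁿ⁺¹` (`S` is invertible) and
`∑ₖ aₖ ⟪x, vₖ⟫² = c ⬝ S A S c`; this is (i).

The Gram–Schmidt vector `e = v̂ₙ` lies in the span and is orthogonal to `v₀, …, vₙ₋₁`, so its
coefficient vector solves `G t = ⟪e, vₙ⟫ δₙ`. Hence `tₙ = ⟪e, vₙ⟫ (G⁻¹)ₙₙ`, while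
`1 = ‖e‖² = tₙ ⟪e, vₙ⟫`; this is (ii).

Finally `⟪x, K x⟫ ≥ ∑_{k ≤ n} aₖ ⟪x, vₖ⟫²`, so testing the min-max characterisation of `λₙ(K)`
on the `(n+1)`-dimensional span of `v₀, …, vₙ` gives (iii) from (i).
-/

open scoped InnerProductSpace

/-- The smallest eigenvalue of a symmetric real matrix, as the minimum of its
Rayleigh quotient over the unit sphere. -/
noncomputable def lambdaMin {m : ℕ} (M : Matrix (Fin m) (Fin m) ℝ) : ℝ :=
  ⨅ x : {x : Fin m → ℝ // ∑ i, x i ^ 2 = 1}, dotProduct x.1 (M.mulVec x.1)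

noncomputable def posSemidefSqrt {n : Type*} [Fintype n] [DecidableEq n]
    {A : Matrix n n ℝ} (hA : A.PosSemidef) : Matrix n n ℝ :=
  (hA.1.eigenvectorUnitary : Matrix n n ℝ) * Matrix.diagonal (Real.sqrt ∘ hA.1.eigenvalues) *
    (star hA.1.eigenvectorUnitary : Matrix n n ℝ)

open Matrix

section PosSemidefSqrt

variable {ι : Type*} [Fintype ι] [DecidableEq ι] {A : Matrix ι ι ℝ}

theorem transpose_posSemidefSqrt (hA : A.PosSemidef) :
    (posSemidefSqrt hA)ᵀ = posSemidefSqrt hA := by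
  simp only [posSemidefSqrt, transpose_mul, star_eq_conjTranspose,
    conjTranspose_eq_transpose_of_trivial, transpose_transpose, diagonal_transpose,
    Matrix.mul_assoc]

theorem posSemidefSqrt_mul_self (hA : A.PosSemidef) :
    posSemidefSqrt hA * posSemidefSqrt hA = A := by
  have hD : diagonal (Real.sqrt ∘ hA.1.eigenvalues) * diagonal (Real.sqrt ∘ hA.1.eigenvalues)
      = diagonal (RCLike.ofReal ∘ hA.1.eigenvalues) := by
    rw [diagonal_mul_diagonal]
    congr 1
    funext i
    simp [Real.mul_self_sqrt (hA.eigenvalues_nonneg i)]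
  conv_rhs => rw [hA.1.spectral_theorem, Unitary.conjStarAlgAut_apply, ← hD]
  simp only [posSemidefSqrt, Matrix.mul_assoc]
  rw [← Matrix.mul_assoc (star (hA.1.eigenvectorUnitary : Matrix ι ι ℝ)),
    Unitary.coe_star_mul_self, Matrix.one_mul]

end PosSemidefSqrt

theorem isCompact_setOf_sum_sq_eq_one {ι : Type*} [Fintype ι] :
    IsCompact {c : ι → ℝ | ∑ i, c i ^ 2 = 1} := by
  have h := (isCompact_sphere (0 : EuclideanSpace ℝ ι) 1).image (PiLp.continuous_ofLp 2 _)
  rw [EuclideanSpace.sphere_zero_eq 1 zero_le_one, one_pow] at h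
  exact (WithLp.ofLp_surjective 2).image_preimage {c : ι → ℝ | ∑ i, c i ^ 2 = 1} ▸ h

theorem isLeast_lambdaMin {m : ℕ} [NeZero m] (M : Matrix (Fin m) (Fin m) ℝ) :
    IsLeast (Set.range fun c : {c : Fin m → ℝ // ∑ i, c i ^ 2 = 1} => c.1 ⬝ᵥ M *ᵥ c.1)
      (lambdaMin M) := by
  have hne : Set.Nonempty {c : Fin m → ℝ | ∑ i, c i ^ 2 = 1} :=
    ⟨Pi.single 0 1, by simp [Pi.single_apply]⟩
  have h := (isCompact_setOf_sum_sq_eq_one.image (f := fun c => c ⬝ᵥ M *ᵥ c)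
    (by fun_prop)).isLeast_sInf (hne.image _)
  rwa [Set.image_eq_range] at h

theorem mulVec_dotProduct_mulVec {ι κ R : Type*} [Fintype ι] [Fintype κ] [CommSemiring R]
    (S : Matrix ι κ R) (M : Matrix ι ι R) (S' : Matrix ι κ R) (t u : κ → R) :
    S *ᵥ t ⬝ᵥ M *ᵥ (S' *ᵥ u) = t ⬝ᵥ (Sᵀ * M * S') *ᵥ u := by
  rw [← mulVec_mulVec, ← mulVec_mulVec, dotProduct_transpose_mulVec, dotProduct_comm]

theorem gram_mulVec_apply {𝕜 E ι : Type*} [RCLike 𝕜] [SeminormedAddCommGroup E]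
    [InnerProductSpace 𝕜 E] [Fintype ι] (w : ι → E) (t : ι → 𝕜) (j : ι) :
    (gram 𝕜 w *ᵥ t) j = ⟪w j, ∑ i, t i • w i⟫_𝕜 := by
  simp [mulVec, dotProduct, inner_sum, inner_smul_right, mul_comm]

section Gram

variable {H : Type*} [NormedAddCommGroup H] [InnerProductSpace ℝ H]

theorem setOf_gram_quadForm_eq_range {m : ℕ} (w : Fin m → H) {S : Matrix (Fin m) (Fin m) ℝ}
    (hS : Sᵀ = S) (hSS : S * S = gram ℝ w) (hSu : IsUnit S) (M : Matrix (Fin m) (Fin m) ℝ) :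
    {r | ∃ x ∈ Submodule.span ℝ (Set.range w), ‖x‖ = 1 ∧
        r = (fun k => ⟪w k, x⟫_ℝ) ⬝ᵥ M *ᵥ (fun k => ⟪w k, x⟫_ℝ)} =
      Set.range fun c : {c : Fin m → ℝ // ∑ i, c i ^ 2 = 1} => c.1 ⬝ᵥ (S * M * S) *ᵥ c.1 := by
  have hcoeff (t : Fin m → ℝ) : (fun k => ⟪w k, ∑ i, t i • w i⟫_ℝ) = S *ᵥ (S *ᵥ t) := by
    ext k
    rw [mulVec_mulVec, hSS, gram_mulVec_apply]
  have hnorm (t : Fin m → ℝ) : ‖∑ i, t i • w i‖ ^ 2 = ∑ i, (S *ᵥ t) i ^ 2 :=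
    calc ‖∑ i, t i • w i‖ ^ 2 = t ⬝ᵥ gram ℝ w *ᵥ t := by
          rw [← real_inner_self_eq_norm_sq, ← star_dotProduct_gram_mulVec, star_trivial]
      _ = S *ᵥ t ⬝ᵥ 1 *ᵥ (S *ᵥ t) := by rw [mulVec_dotProduct_mulVec, hS, Matrix.mul_one, hSS]
      _ = ∑ i, (S *ᵥ t) i ^ 2 := by simp [dotProduct, sq]
  have hquad (t : Fin m → ℝ) :
      (fun k => ⟪w k, ∑ i, t i • w i⟫_ℝ) ⬝ᵥ M *ᵥ (fun k => ⟪w k, ∑ i, t i • w i⟫_ℝ) =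
        S *ᵥ t ⬝ᵥ (S * M * S) *ᵥ (S *ᵥ t) := by
    rw [hcoeff, mulVec_dotProduct_mulVec, hS]
  ext r
  constructor
  · rintro ⟨x, hx, hx1, rfl⟩
    obtain ⟨t, rfl⟩ := (Submodule.mem_span_range_iff_exists_fun ℝ).1 hx
    exact ⟨⟨S *ᵥ t, by rw [← hnorm, hx1, one_pow]⟩, (hquad t).symm⟩
  · rintro ⟨⟨c, hc⟩, rfl⟩
    obtain ⟨t, rfl⟩ := mulVec_surjective_iff_isUnit.2 hSu c
    refine ⟨∑ i, t i • w i, ?_, ?_, (hquad t).symm⟩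
    · exact Submodule.sum_mem _ fun i _ => Submodule.smul_mem _ _ (Submodule.subset_span ⟨i, rfl⟩)
    · rw [← pow_eq_one_iff_of_nonneg (norm_nonneg _) two_ne_zero, hnorm, hc]

theorem isLeast_sum_mul_inner_sq {m : ℕ} [NeZero m] (w : Fin m → H) (d : Fin m → ℝ)
    (hG : (gram ℝ w).PosDef) :
    IsLeast {r | ∃ x, x ∈ Submodule.span ℝ (Set.range w) ∧ ‖x‖ = 1 ∧
        r = ∑ k, d k * ⟪x, w k⟫_ℝ ^ 2}
      (lambdaMin (posSemidefSqrt hG.posSemidef * diagonal d * posSemidefSqrt hG.posSemidef)) := by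
  have hSS := posSemidefSqrt_mul_self hG.posSemidef
  have hSu : IsUnit (posSemidefSqrt hG.posSemidef) := by
    rw [isUnit_iff_isUnit_det]
    refine isUnit_of_mul_isUnit_left (y := (posSemidefSqrt hG.posSemidef).det) ?_
    rw [← det_mul, hSS, ← isUnit_iff_isUnit_det]
    exact hG.isUnit
  have hquad (x : H) : (fun k => ⟪w k, x⟫_ℝ) ⬝ᵥ diagonal d *ᵥ (fun k => ⟪w k, x⟫_ℝ) =
      ∑ k, d k * ⟪x, w k⟫_ℝ ^ 2 := by
    simp only [mulVec_diagonal, dotProduct, real_inner_comm x]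
    exact Finset.sum_congr rfl fun k _ => by ring
  simp_rw [← hquad]
  rw [setOf_gram_quadForm_eq_range w (transpose_posSemidefSqrt _) hSS hSu]
  exact isLeast_lambdaMin _

theorem inner_sq_mul_gram_inv_apply_self {ι : Type*} [Fintype ι] [DecidableEq ι] {w : ι → H}
    (hG : IsUnit (gram ℝ w)) {e : H} (he : e ∈ Submodule.span ℝ (Set.range w)) {i : ι}
    (horth : ∀ j ≠ i, ⟪e, w j⟫_ℝ = 0) :
    ⟪e, w i⟫_ℝ ^ 2 * (gram ℝ w)⁻¹ i i = ‖e‖ ^ 2 := by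
  obtain ⟨t, rfl⟩ := (Submodule.mem_span_range_iff_exists_fun ℝ).1 he
  set r := ⟪∑ j, t j • w j, w i⟫_ℝ
  have hGt : gram ℝ w *ᵥ t = Pi.single i r := by
    ext j
    rw [gram_mulVec_apply, real_inner_comm]
    rcases eq_or_ne j i with rfl | hj
    · simp [r]
    · simp [horth j hj, hj]
  have hti : t i = (gram ℝ w)⁻¹ i i * r := by
    have ht : t = (gram ℝ w)⁻¹ *ᵥ (gram ℝ w *ᵥ t) := by
      rw [mulVec_mulVec, nonsing_inv_mul _ ((isUnit_iff_isUnit_det _).1 hG), one_mulVec]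
    rw [ht, hGt, mulVec_single]
    simp
  calc r ^ 2 * (gram ℝ w)⁻¹ i i = ∑ j, t j * ⟪∑ k, t k • w k, w j⟫_ℝ := by
        rw [Finset.sum_eq_single i (fun j _ hj => by rw [horth j hj, mul_zero]) (by simp), hti]
        ring
    _ = ‖∑ j, t j • w j‖ ^ 2 := by
        rw [← real_inner_self_eq_norm_sq, inner_sum]
        simp only [real_inner_smul_right]

theorem gram_inv_apply_last_eq_one_div_inner_gramSchmidtNormed_sq {v : ℕ → H}
    (hli : LinearIndependent ℝ v) (n : ℕ) :
    (gram ℝ fun k : Fin (n + 1) => v k)⁻¹ (Fin.last n) (Fin.last n) =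
      1 / ⟪InnerProductSpace.gramSchmidtNormed ℝ v n, v n⟫_ℝ ^ 2 := by
  set e := InnerProductSpace.gramSchmidtNormed ℝ v n
  have he : e ∈ Submodule.span ℝ (Set.range fun k : Fin (n + 1) => v k) := by
    refine Submodule.smul_mem _ _ (Submodule.span_mono ?_
      (InnerProductSpace.gramSchmidt_mem_span ℝ v le_rfl))
    rintro _ ⟨k, hk, rfl⟩
    exact ⟨⟨k, Nat.lt_succ_of_le hk⟩, rfl⟩
  have horth (j : Fin (n + 1)) (hj : j ≠ Fin.last n) : ⟪e, v j⟫_ℝ = 0 := by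
    simp only [e, InnerProductSpace.gramSchmidtNormed, real_inner_smul_left,
      InnerProductSpace.gramSchmidt_inv_triangular ℝ v (Fin.val_lt_last hj), mul_zero]
  have key := inner_sq_mul_gram_inv_apply_self
    (posDef_gram_of_linearIndependent (hli.comp _ Fin.val_injective)).isUnit he horth
  rw [InnerProductSpace.gramSchmidtNormed_unit_length n hli, one_pow] at key
  exact eq_one_div_of_mul_eq_one_right key

end Gram

section MinMax

variable {H : Type*} [NormedAddCommGroup H] [InnerProductSpace ℝ H]

theorem exists_mem_norm_eq_one_of_finrank_pos {V : Submodule ℝ H}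
    (hV : 0 < Module.finrank ℝ V) : ∃ x ∈ V, ‖x‖ = 1 := by
  have := Module.nontrivial_of_finrank_pos hV
  obtain ⟨x, hx⟩ := exists_norm_eq V zero_le_one
  exact ⟨x, x.2, hx⟩

theorem le_nthEig {K : H → H} {C : ℝ} (hK : ∀ x, ‖x‖ = 1 → |⟪x, K x⟫_ℝ| ≤ C) {n : ℕ}
    {V : Submodule ℝ H} (hV : Module.finrank ℝ V = n + 1) {c : ℝ}
    (hc : ∀ x ∈ V, ‖x‖ = 1 → c ≤ ⟪x, K x⟫_ℝ) : c ≤ nthEig K n := by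
  have hunit (W : {W : Submodule ℝ H // Module.finrank ℝ W = n + 1}) :
      Nonempty {x : H // x ∈ W.1 ∧ ‖x‖ = 1} := by
    obtain ⟨x, hxW, hx⟩ := exists_mem_norm_eq_one_of_finrank_pos (by rw [W.2]; exact n.succ_pos)
    exact ⟨⟨x, hxW, hx⟩⟩
  have hbdd (W : {W : Submodule ℝ H // Module.finrank ℝ W = n + 1}) :
      BddBelow (Set.range fun x : {x : H // x ∈ W.1 ∧ ‖x‖ = 1} => ⟪x.1, K x.1⟫_ℝ) :=
    ⟨-C, by rintro _ ⟨x, rfl⟩; exact (abs_le.1 (hK x.1 x.2.2)).1⟩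
  have hbddAbove : BddAbove (Set.range fun W : {W : Submodule ℝ H // Module.finrank ℝ W = n + 1} =>
      ⨅ x : {x : H // x ∈ W.1 ∧ ‖x‖ = 1}, ⟪x.1, K x.1⟫_ℝ) := by
    refine ⟨C, ?_⟩
    rintro _ ⟨W, rfl⟩
    obtain ⟨x⟩ := hunit W
    exact (ciInf_le (hbdd W) x).trans (abs_le.1 (hK x.1 x.2.2)).2
  have := hunit ⟨V, hV⟩
  refine le_trans ?_ (le_ciSup hbddAbove ⟨V, hV⟩)
  exact le_ciInf fun x => hc x.1 x.2.1 x.2.2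

end MinMax

section WeightedRankOneSum

variable {H : Type*} [NormedAddCommGroup H] [InnerProductSpace ℝ H]

noncomputable def weightedRankOneSum (a : ℕ → ℝ) (v : ℕ → H) (x : H) : H :=
  ∑' k, (a k * ⟪v k, x⟫_ℝ) • v k

variable [CompleteSpace H] {v : ℕ → H} {a : ℕ → ℝ}

theorem hasSum_inner_weightedRankOneSum (hv : ∀ k, ‖v k‖ ≤ 1) (ha : Summable a) (x : H) :
    HasSum (fun k => a k * ⟪v k, x⟫_ℝ ^ 2) ⟪x, weightedRankOneSum a v x⟫_ℝ := by
  have hbound (k : ℕ) : |⟪v k, x⟫_ℝ| ≤ ‖x‖ :=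
    (abs_real_inner_le_norm _ _).trans (mul_le_of_le_one_left (norm_nonneg _) (hv k))
  have hsummable : Summable fun k => (a k * ⟪v k, x⟫_ℝ) • v k := by
    refine ha.abs.mul_right ‖x‖ |>.of_norm_bounded fun k => ?_
    rw [norm_smul, Real.norm_eq_abs, abs_mul]
    exact mul_le_of_le_one_right (by positivity) (hv k) |>.trans
      (mul_le_mul_of_nonneg_left (hbound k) (abs_nonneg _))
  have h := (innerSL ℝ x).hasSum hsummable.hasSum
  simp only [innerSL_apply_apply, real_inner_smul_right] at h
  simpa only [weightedRankOneSum, sq, mul_assoc, real_inner_comm x] using h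

theorem abs_inner_weightedRankOneSum_le (hv : ∀ k, ‖v k‖ ≤ 1) (ha : ∀ k, 0 ≤ a k)
    (hsum : Summable a) {x : H} (hx : ‖x‖ = 1) :
    |⟪x, weightedRankOneSum a v x⟫_ℝ| ≤ ∑' k, a k := by
  have h := hasSum_inner_weightedRankOneSum hv hsum x
  rw [abs_of_nonneg (h.nonneg fun k => mul_nonneg (ha k) (sq_nonneg _))]
  refine hasSum_le (fun k => mul_le_of_le_one_right (ha k) ?_) h hsum.hasSum
  rw [sq_le_one_iff_abs_le_one, ← hx]
  exact (abs_real_inner_le_norm _ _).trans (mul_le_of_le_one_left (norm_nonneg _) (hv k))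

end WeightedRankOneSum

theorem gram_quadratic_lower_bound_general
    {H : Type*} [NormedAddCommGroup H] [InnerProductSpace ℝ H] [CompleteSpace H]
    (v : ℕ → H) (hv1 : ∀ k, ‖v k‖ = 1) (hli : LinearIndependent ℝ v)
    (n : ℕ) (a : ℕ → ℝ) (ha : ∀ k, 0 ≤ a k) (hsum : Summable a)
    (hG : (Matrix.of fun i j : Fin (n + 1) => ⟪v (i : ℕ), v (j : ℕ)⟫_ℝ).PosDef) :
    IsLeast
      {r : ℝ | ∃ x : H,
        x ∈ Submodule.span ℝ (Set.range fun k : Fin (n + 1) => v (k : ℕ)) ∧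
        ‖x‖ = 1 ∧ r = ∑ k : Fin (n + 1), a (k : ℕ) * ⟪x, v (k : ℕ)⟫_ℝ ^ 2}
      (lambdaMin
        (posSemidefSqrt hG.posSemidef * Matrix.diagonal (fun k : Fin (n + 1) => a (k : ℕ)) *
          posSemidefSqrt hG.posSemidef)) ∧
    (Matrix.of fun i j : Fin (n + 1) => ⟪v (i : ℕ), v (j : ℕ)⟫_ℝ)⁻¹ (Fin.last n)
        (Fin.last n)
      = 1 / ⟪InnerProductSpace.gramSchmidtNormed ℝ v n, v n⟫_ℝ ^ 2 ∧
    lambdaMin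
        (posSemidefSqrt hG.posSemidef * Matrix.diagonal (fun k : Fin (n + 1) => a (k : ℕ)) *
          posSemidefSqrt hG.posSemidef)
      ≤ nthEig (fun x : H => ∑' k : ℕ, (a k * ⟪v k, x⟫_ℝ) • v k) n := by
  have hv (k : ℕ) : ‖v k‖ ≤ 1 := (hv1 k).le
  have hleast := isLeast_sum_mul_inner_sq (fun k : Fin (n + 1) => v k) (fun k => a k) hG
  refine ⟨hleast, gram_inv_apply_last_eq_one_div_inner_gramSchmidtNormed_sq hli n, ?_⟩
  have hspan : Module.finrank ℝ (Submodule.span ℝ (Set.range fun k : Fin (n + 1) => v k)) =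
      n + 1 := by
    simpa [Function.comp_def] using finrank_span_eq_card (hli.comp _ Fin.val_injective)
  refine le_nthEig (K := weightedRankOneSum a v)
    (fun x hx => abs_inner_weightedRankOneSum_le hv ha hsum hx) hspan fun x hx hx1 => ?_
  calc _ ≤ ∑ k : Fin (n + 1), a k * ⟪x, v k⟫_ℝ ^ 2 := hleast.2 ⟨x, hx, hx1, rfl⟩
    _ = ∑ k ∈ Finset.range (n + 1), a k * ⟪v k, x⟫_ℝ ^ 2 := by
        simp_rw [real_inner_comm _ x]
        exact Fin.sum_univ_eq_sum_range (fun k => a k * ⟪v k, x⟫_ℝ ^ 2) (n + 1)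
    _ ≤ ⟪x, weightedRankOneSum a v x⟫_ℝ :=
        sum_le_hasSum _ (fun k _ => mul_nonneg (ha k) (sq_nonneg _))
          (hasSum_inner_weightedRankOneSum hv hsum x)

/-- **Quadratic-programming lower bound for kernel eigenvalues.** With
`G = (⟨v_i,v_j⟩)_{i,j=0}^n` the Gram matrix of the unit vectors `v₀,…,v_n` and
`A = diag(a₀,…,a_n)`: (i) the minimum of `Σ_{k≤n} a_k⟨x,v_k⟩²` over unit vectors
`x ∈ span(v₀,…,v_n)` equals `λ_min(G^{1/2} A G^{1/2})`; (ii) `(G⁻¹)_{nn} =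
1/|⟨v̂_n,v_n⟩|²`; (iii) for any nonnegative summable extension of the coefficients,
`λ_n(K) ≥ λ_min(G^{1/2} A G^{1/2})` for `K = Σ_{k=0}^∞ a_k⟨v_k,·⟩v_k`. -/
theorem gram_quadratic_lower_bound
    {H : Type*} [NormedAddCommGroup H] [InnerProductSpace ℝ H] [CompleteSpace H]
    [TopologicalSpace.SeparableSpace H]
    (v : ℕ → H) (hv1 : ∀ k, ‖v k‖ = 1) (hli : LinearIndependent ℝ v)
    (hdense : (Submodule.span ℝ (Set.range v)).topologicalClosure = ⊤)
    (n : ℕ) (a : ℕ → ℝ) (ha : ∀ k, 0 ≤ a k) (hsum : Summable a)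
    (hG : (Matrix.of fun i j : Fin (n + 1) => ⟪v (i : ℕ), v (j : ℕ)⟫_ℝ).PosDef) :
    IsLeast
      {r : ℝ | ∃ x : H,
        x ∈ Submodule.span ℝ (Set.range fun k : Fin (n + 1) => v (k : ℕ)) ∧
        ‖x‖ = 1 ∧ r = ∑ k : Fin (n + 1), a (k : ℕ) * ⟪x, v (k : ℕ)⟫_ℝ ^ 2}
      (lambdaMin
        (posSemidefSqrt hG.posSemidef * Matrix.diagonal (fun k : Fin (n + 1) => a (k : ℕ)) *
          posSemidefSqrt hG.posSemidef)) ∧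
    (Matrix.of fun i j : Fin (n + 1) => ⟪v (i : ℕ), v (j : ℕ)⟫_ℝ)⁻¹ (Fin.last n)
        (Fin.last n)
      = 1 / ⟪InnerProductSpace.gramSchmidtNormed ℝ v n, v n⟫_ℝ ^ 2 ∧
    lambdaMin
        (posSemidefSqrt hG.posSemidef * Matrix.diagonal (fun k : Fin (n + 1) => a (k : ℕ)) *
          posSemidefSqrt hG.posSemidef)
      ≤ nthEig (fun x : H => ∑' k : ℕ, (a k * ⟪v k, x⟫_ℝ) • v k) n :=
  gram_quadratic_lower_bound_general v hv1 hli n a ha hsum hG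
end
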